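/- arXiv:2305.05783 — 6 statements merged into one kernel-verified Lean document; each statement's English description precedes it below -/
import Mathlib

section
/- Let $E$ be a nonempty compact convex subset of a topological real vector space, $F$ a closed face of $E$, and $f : E \to (-\infty,+\infty]$ a bounded-below lower semicontinuous affine function. Then the set $Y = \{ x \in F : f(x) = \inf_{\tilde x \in F} f(\tilde x) \}$ is a nonempty closed face of $E$. -/
lemma aux_mul_lt {α : ℝ} (hα : 0 < α) {r : ℝ} {a : EReal} (h : (r : EReal) < a) :
    (α : EReal) * (r : EReal) < (α : EReal) * a := by
  induction a with
  | bot => exact absurd h (by simp)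
  | coe s =>
      rw [← EReal.coe_mul, ← EReal.coe_mul]
      exact_mod_cast mul_lt_mul_of_pos_left (by exact_mod_cast h) hα
  | top =>
      rw [EReal.coe_mul_top_of_pos hα, ← EReal.coe_mul]
      exact EReal.coe_lt_top _

lemma aux_mul_le {α : ℝ} (hα : 0 ≤ α) {r : ℝ} {a : EReal} (h : (r : EReal) ≤ a) :
    (α : EReal) * (r : EReal) ≤ (α : EReal) * a := by
  rcases eq_or_lt_of_le hα with h0 | h0
  · rw [← h0]; simp
  rcases eq_or_lt_of_le h with h' | h'
  · rw [h']
  · exact (aux_mul_lt h0 h').le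

lemma aux_mul_ne_bot {α : ℝ} (hα : 0 ≤ α) {a : EReal} (ha : a ≠ ⊥) :
    (α : EReal) * a ≠ ⊥ := by
  induction a with
  | bot => exact absurd rfl ha
  | coe s => rw [← EReal.coe_mul]; exact EReal.coe_ne_bot _
  | top =>
      rcases eq_or_lt_of_le hα with h0 | h0
      · rw [← h0]; simp
      · rw [EReal.coe_mul_top_of_pos h0]; simp

lemma aux_combine {α : ℝ} (h0 : 0 ≤ α) (h1 : α ≤ 1) {m : EReal} (hm : m ≠ ⊥) :
    (α : EReal) * m + ((1 - α : ℝ) : EReal) * m = m := by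
  induction m with
  | bot => exact absurd rfl hm
  | coe s =>
      rw [← EReal.coe_mul, ← EReal.coe_mul, ← EReal.coe_add]
      norm_cast; ring
  | top =>
      rcases eq_or_lt_of_le h0 with h | h
      · rw [← h]; simp [EReal.coe_mul_top_of_pos one_pos]
      · rw [EReal.coe_mul_top_of_pos h]
        rcases eq_or_lt_of_le h1 with h' | h'
        · rw [h']; simp
        · rw [EReal.coe_mul_top_of_pos (by linarith : (0:ℝ) < 1 - α)]; simp

/-- Sublevel sets inside a closed subset of the lsc domain are closed. -/
lemma aux_sublevel_closed {V : Type*} [TopologicalSpace V] {E F : Set V}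
    (hFE : F ⊆ E) (hFcl : IsClosed F) {f : V → EReal}
    (hlsc : LowerSemicontinuousOn f E) (c : EReal) :
    IsClosed {x ∈ F | f x ≤ c} := by
  rw [← isOpen_compl_iff]
  rw [isOpen_iff_mem_nhds]
  intro x hx
  by_cases hxF : x ∈ F
  · have hxc : c < f x := by
      simp only [Set.mem_compl_iff, Set.mem_setOf_eq, not_and, not_le] at hx
      exact hx hxF
    have := hlsc x (hFE hxF) c hxc
    rw [nhdsWithin, Filter.eventually_inf_principal] at this
    filter_upwards [this] with z hz hzmem
    exact absurd hzmem.2 (not_le.mpr (hz (hFE hzmem.1)))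
  · filter_upwards [hFcl.isOpen_compl.mem_nhds hxF] with z hz hzmem
    exact hz hzmem.1

/-- `D` is an extreme subset of `E`. -/
def IsExtremeSubset {V : Type*} [AddCommGroup V] [Module ℝ V] (E D : Set V) : Prop :=
  D.Nonempty ∧ D ⊆ E ∧
    ∀ u ∈ D, ∀ α : ℝ, 0 < α → α < 1 → ∀ u₁ ∈ E, ∀ u₂ ∈ E,
      u = α • u₁ + (1 - α) • u₂ → u₁ ∈ D ∧ u₂ ∈ D

/-- `F` is a face of `E`: a nonempty convex extreme subset. -/
def IsFaceOf {V : Type*} [AddCommGroup V] [Module ℝ V] (E F : Set V) : Prop :=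
  Convex ℝ F ∧ IsExtremeSubset E F

/-- `f` is affine on `E`, with `(-∞,+∞]`-values (so never `⊥` on `E`),
using the conventions `0 ⬝ ∞ = 0` and `a + ∞ = ∞` of `EReal`. -/
def IsAffineOn {V : Type*} [AddCommGroup V] [Module ℝ V] (E : Set V) (f : V → EReal) : Prop :=
  (∀ x ∈ E, f x ≠ ⊥) ∧
    ∀ x ∈ E, ∀ y ∈ E, ∀ α : ℝ, 0 ≤ α → α ≤ 1 →
      f (α • x + (1 - α) • y) = (α : EReal) * f x + ((1 - α) : EReal) * f y

theorem argmin_on_closed_face {V : Type*} [AddCommGroup V] [Module ℝ V]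
    [TopologicalSpace V]
    (E F : Set V) (hEne : E.Nonempty) (hEcomp : IsCompact E) (hEconv : Convex ℝ E)
    (hF : IsFaceOf E F) (hFcl : IsClosed F)
    (f : V → EReal)
    (haff : IsAffineOn E f)
    (hbdd : ∃ c : ℝ, ∀ x ∈ E, (c : EReal) ≤ f x)
    (hlsc : LowerSemicontinuousOn f E) :
    IsFaceOf E {x ∈ F | f x = sInf (f '' F)} ∧
      IsClosed {x ∈ F | f x = sInf (f '' F)} := by
  obtain ⟨hFconv, hFne, hFE, hFext⟩ := hF
  obtain ⟨c, hc⟩ := hbdd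
  set m := sInf (f '' F) with hm
  -- the infimum is a lower bound and above c
  have hmle : ∀ x ∈ F, m ≤ f x := fun x hx => sInf_le ⟨x, hx, rfl⟩
  have hcm : (c : EReal) ≤ m := le_sInf (by rintro b ⟨x, hx, rfl⟩; exact hc x (hFE hx))
  have hmbot : m ≠ ⊥ := fun h => by simp [h] at hcm
  -- existence of a minimizer via Cantor intersection
  have hFcomp : IsCompact F := hEcomp.of_isClosed_subset hFcl hFE
  haveI : Nonempty F := hFne.to_subtype
  have hmin : ∃ x₀ ∈ F, ∀ y ∈ F, f x₀ ≤ f y := by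
    set S : F → Set V := fun y => {x ∈ F | f x ≤ f y} with hS
    have hScl : ∀ y, IsClosed (S y) := fun y => aux_sublevel_closed hFE hFcl hlsc _
    have hSsub : ∀ y, S y ⊆ F := fun y x hx => hx.1
    have hSne : ∀ y : F, (S y).Nonempty := fun y => ⟨y, y.2, le_refl _⟩
    have hScomp : ∀ y, IsCompact (S y) :=
      fun y => hFcomp.of_isClosed_subset (hScl y) (hSsub y)
    have hdir : Directed (· ⊇ ·) S := by
      intro i j
      rcases le_total (f i) (f j) with h | h
      · exact ⟨i, fun x hx => hx, fun x hx => ⟨hx.1, hx.2.trans h⟩⟩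
      · exact ⟨j, fun x hx => ⟨hx.1, hx.2.trans h⟩, fun x hx => hx⟩
    obtain ⟨x₀, hx₀⟩ := IsCompact.nonempty_iInter_of_directed_nonempty_isCompact_isClosed
      S hdir hSne hScomp hScl
    simp only [Set.mem_iInter] at hx₀
    refine ⟨x₀, (hx₀ ⟨hFne.choose, hFne.choose_spec⟩).1, fun y hy => (hx₀ ⟨y, hy⟩).2⟩
  obtain ⟨x₀, hx₀F, hx₀min⟩ := hmin
  have hx₀m : f x₀ = m := le_antisymm
    (le_sInf (by rintro b ⟨x, hx, rfl⟩; exact hx₀min x hx)) (hmle x₀ hx₀F)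
  set Y := {x ∈ F | f x = m} with hY
  have hYne : Y.Nonempty := ⟨x₀, hx₀F, hx₀m⟩
  have hYF : Y ⊆ F := fun x hx => hx.1
  have hYE : Y ⊆ E := hYF.trans hFE
  -- key: membership in Y is equivalent to a sublevel condition
  have hYeq : Y = {x ∈ F | f x ≤ m} := by
    ext x
    exact ⟨fun hx => ⟨hx.1, hx.2.le⟩, fun hx => ⟨hx.1, le_antisymm hx.2 (hmle x hx.1)⟩⟩
  have hYcl : IsClosed Y := hYeq ▸ aux_sublevel_closed hFE hFcl hlsc m
  -- convexity of Y
  have hYconv : Convex ℝ Y := by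
    intro x hx y hy a b ha hb hab
    have hb' : b = 1 - a := by linarith
    subst hb'
    have hxE := hYE hx
    have hyE := hYE hy
    refine ⟨hFconv hx.1 hy.1 ha hb hab, ?_⟩
    rw [haff.2 x hxE y hyE a ha (by linarith), hx.2, hy.2]
    have hco : ((1 - a : ℝ) : EReal) = 1 - (a : EReal) := by norm_cast
    rw [← hco]
    exact aux_combine ha (by linarith) hmbot
  -- extremality of Y
  refine ⟨⟨hYconv, hYne, hYE, ?_⟩, hYcl⟩
  intro u hu α hα0 hα1 u₁ hu₁ u₂ hu₂ hsum
  -- first, u₁, u₂ ∈ F since F is extreme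
  obtain ⟨hu₁F, hu₂F⟩ := hFext u (hYF hu) α hα0 hα1 u₁ hu₁ u₂ hu₂ hsum
  have hfu : f u = m := hu.2
  have hco : ((1 - α : ℝ) : EReal) = 1 - (α : EReal) := by norm_cast
  have key : (α : EReal) * f u₁ + ((1 - α : ℝ) : EReal) * f u₂ = m := by
    rw [hco, ← haff.2 u₁ hu₁ u₂ hu₂ α hα0.le hα1.le, ← hsum, hfu]
  -- if m = ⊤, both values are trivially m
  rcases eq_or_ne m ⊤ with hmt | hmt
  · refine ⟨⟨hu₁F, ?_⟩, ⟨hu₂F, ?_⟩⟩ <;>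
      [exact le_antisymm (hmt ▸ le_top) (hmle u₁ hu₁F);
       exact le_antisymm (hmt ▸ le_top) (hmle u₂ hu₂F)]
  -- otherwise m is a real number
  obtain ⟨r, hr⟩ : ∃ r : ℝ, m = (r : EReal) := ⟨m.toReal, (EReal.coe_toReal hmt hmbot).symm⟩
  have hα1' : (0:ℝ) < 1 - α := by linarith
  have h₁ : (r : EReal) ≤ f u₁ := hr ▸ hmle u₁ hu₁F
  have h₂ : (r : EReal) ≤ f u₂ := hr ▸ hmle u₂ hu₂F
  have hfu₂bot : f u₂ ≠ ⊥ := haff.1 u₂ hu₂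
  have hfu₁bot : f u₁ ≠ ⊥ := haff.1 u₁ hu₁
  have hrsum : (α : EReal) * (r : EReal) + ((1 - α : ℝ) : EReal) * (r : EReal) = (r : EReal) := by
    rw [← EReal.coe_mul, ← EReal.coe_mul, ← EReal.coe_add]
    norm_cast; ring
  have hrsum' : ((1 - α : ℝ) : EReal) * (r : EReal) + (α : EReal) * (r : EReal) = (r : EReal) := by
    rw [← EReal.coe_mul, ← EReal.coe_mul, ← EReal.coe_add]
    norm_cast; ring
  have hstrict₁ : f u₁ = (r : EReal) := by
    by_contra hne
    have hlt : (r : EReal) < f u₁ := lt_of_le_of_ne h₁ (Ne.symm hne)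
    have hthis : (α : EReal) * (r : EReal) + ((1 - α : ℝ) : EReal) * (r : EReal)
        < (α : EReal) * f u₁ + ((1 - α : ℝ) : EReal) * f u₂ := by
      apply EReal.add_lt_add_of_lt_of_le' (aux_mul_lt hα0 hlt)
        (aux_mul_le hα1'.le h₂) (aux_mul_ne_bot hα1'.le hfu₂bot)
      intro _ habs
      exact absurd habs (by rw [← EReal.coe_mul]; exact EReal.coe_ne_top _)
    rw [hrsum, key, hr] at hthis
    exact lt_irrefl _ hthis
  have hstrict₂ : f u₂ = (r : EReal) := by
    by_contra hne
    have hlt : (r : EReal) < f u₂ := lt_of_le_of_ne h₂ (Ne.symm hne)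
    have hthis : ((1 - α : ℝ) : EReal) * (r : EReal) + (α : EReal) * (r : EReal)
        < ((1 - α : ℝ) : EReal) * f u₂ + (α : EReal) * f u₁ := by
      apply EReal.add_lt_add_of_lt_of_le' (aux_mul_lt hα1' hlt)
        (aux_mul_le hα0.le h₁) (aux_mul_ne_bot hα0.le hfu₁bot)
      intro _ habs
      exact absurd habs (by rw [← EReal.coe_mul]; exact EReal.coe_ne_top _)
    rw [add_comm ((α : EReal) * f u₁)] at key
    rw [hrsum', key, hr] at hthis
    exact lt_irrefl _ hthis
  exact ⟨⟨hu₁F, hstrict₁.trans hr.symm⟩, ⟨hu₂F, hstrict₂.trans hr.symm⟩⟩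
end

section
/- Let $E$ be a nonempty compact convex subset of a topological real vector space, and suppose the family of $(-\infty,+\infty]$-valued bounded-below lower semicontinuous affine functions on $E$ separates points of $E$ (is total). Then every closed face $F$ of $E$ contains at least one extreme point of $E$. -/
/-- `u` is an extreme point of `S`. -/
def IsExtremePointOf {V : Type*} [AddCommGroup V] [Module ℝ V] (S : Set V) (u : V) : Prop :=
  IsExtremeSubset S {u}

/-- The family of bounded-below lower semicontinuous affine `(-∞,+∞]`-valued
functions on `E` separates the points of `E` (is total). -/
def TotalAffineFamily {V : Type*} [AddCommGroup V] [Module ℝ V] [TopologicalSpace V]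
    (E : Set V) : Prop :=
  ∀ x ∈ E, ∀ y ∈ E, x ≠ y →
    ∃ f : V → EReal, IsAffineOn E f ∧ (∃ c : ℝ, ∀ z ∈ E, (c : EReal) ≤ f z) ∧
      LowerSemicontinuousOn f E ∧ f x ≠ f y


open Set

lemma aux_restrict {α : Type*} [TopologicalSpace α] {E : Set α} {f : α → EReal}
    (h : LowerSemicontinuousOn f E) : LowerSemicontinuous (fun x : E => f ↑x) := by
  intro x y hy
  have h2 := h ↑x x.2 y hy
  rw [nhdsWithin_eq_map_subtype_coe x.2, Filter.eventually_map] at h2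
  exact h2

lemma aux_min {X : Type*} [TopologicalSpace X] {D : Set X} (hD : IsCompact D)
    (hne : D.Nonempty) {g : X → EReal} (hg : LowerSemicontinuous g) :
    ∃ z ∈ D, ∀ w ∈ D, g z ≤ g w := by
  by_contra hcon
  push_neg at hcon
  have hcover : D ⊆ ⋃ w : D, g ⁻¹' Set.Ioi (g ↑w) := by
    intro z hz
    obtain ⟨w, hwD, hw⟩ := hcon z hz
    exact Set.mem_iUnion.2 ⟨⟨w, hwD⟩, hw⟩
  obtain ⟨t, ht⟩ := hD.elim_finite_subcover _
    (fun w : D => (lowerSemicontinuous_iff_isOpen_preimage.1 hg) (g ↑w)) hcover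
  obtain ⟨z, hz⟩ := hne
  have hz' := ht hz
  rw [Set.mem_iUnion₂] at hz'
  obtain ⟨w₀, hw₀t, -⟩ := hz'
  obtain ⟨wm, hwmt, hwmin⟩ := t.exists_min_image (fun w => g ↑w) ⟨w₀, hw₀t⟩
  have := ht wm.2
  rw [Set.mem_iUnion₂] at this
  obtain ⟨w', hw't, hlt⟩ := this
  exact absurd (hwmin w' hw't) (not_le.2 hlt)

lemma aux_coe {x : EReal} {c m : ℝ} (hcx : (c:EReal) ≤ x) (hx : x ≤ (m:EReal)) :
    ∃ r : ℝ, x = r ∧ c ≤ r ∧ r ≤ m := by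
  have hbot : x ≠ ⊥ := fun h => by simp [h] at hcx
  have htop : x ≠ ⊤ := fun h => by simp [h] at hx
  refine ⟨x.toReal, (EReal.coe_toReal htop hbot).symm, ?_, ?_⟩ <;>
  · rw [← EReal.coe_le_coe_iff, EReal.coe_toReal htop hbot]; assumption

lemma aux_combo {a b c m : ℝ} (ha : 0 ≤ a) (hb : 0 ≤ b) (hab : a + b = 1) {x y : EReal}
    (hcx : (c:EReal) ≤ x) (hx : x ≤ (m:EReal)) (hcy : (c:EReal) ≤ y) (hy : y ≤ (m:EReal)) :
    (a:EReal) * x + (b:EReal) * y ≤ (m:EReal) := by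
  obtain ⟨r, rfl, hcr, hrm⟩ := aux_coe hcx hx
  obtain ⟨s, rfl, hcs, hsm⟩ := aux_coe hcy hy
  rw [← EReal.coe_mul, ← EReal.coe_mul, ← EReal.coe_add, EReal.coe_le_coe_iff]
  have hm : a * m + b * m = m := by rw [← add_mul, hab, one_mul]
  nlinarith [mul_nonneg ha (sub_nonneg.2 hrm), mul_nonneg hb (sub_nonneg.2 hsm)]

lemma aux_key {α : ℝ} (h0 : 0 < α) (h1 : α < 1) {m : ℝ} {a b : EReal}
    (ha : (m:EReal) ≤ a) (hb : (m:EReal) ≤ b)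
    (h : (α:EReal) * a + (((1-α) : ℝ):EReal) * b ≤ (m:EReal)) :
    a = (m:EReal) ∧ b = (m:EReal) := by
  have h0' : (0:ℝ) < 1 - α := by linarith
  induction a with
  | bot => exact absurd ha (by simp)
  | coe r =>
    induction b with
    | bot => exact absurd hb (by simp)
    | coe s =>
      rw [← EReal.coe_mul, ← EReal.coe_mul, ← EReal.coe_add, EReal.coe_le_coe_iff] at h
      rw [EReal.coe_le_coe_iff] at ha hb
      have h2 : 0 ≤ α * (r - m) := mul_nonneg h0.le (by linarith)
      have h3 : 0 ≤ (1 - α) * (s - m) := mul_nonneg h0'.le (by linarith)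
      have h4 : α * (r - m) + (1 - α) * (s - m) ≤ 0 := by nlinarith
      have hr : α * (r - m) = 0 := by linarith
      have hs : (1 - α) * (s - m) = 0 := by linarith
      have hr' : r = m := by
        rcases mul_eq_zero.mp hr with h' | h' <;> linarith
      have hs' : s = m := by
        rcases mul_eq_zero.mp hs with h' | h' <;> linarith
      exact ⟨by exact_mod_cast hr', by exact_mod_cast hs'⟩
    | top =>
      rw [EReal.coe_mul_top_of_pos h0', ← EReal.coe_mul,
        EReal.add_top_of_ne_bot (EReal.coe_ne_bot _)] at h
      exact absurd h (by simp)
  | top =>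
    rw [EReal.coe_mul_top_of_pos h0] at h
    have hb' : (((1-α) : ℝ):EReal) * b ≠ ⊥ := by
      induction b with
      | bot => exact absurd hb (by simp)
      | coe s => rw [← EReal.coe_mul]; exact EReal.coe_ne_bot _
      | top => rw [EReal.coe_mul_top_of_pos h0']; simp
    rw [EReal.top_add_of_ne_bot hb'] at h
    exact absurd h (by simp)

theorem closed_face_contains_extreme_point {V : Type*} [AddCommGroup V] [Module ℝ V]
    [TopologicalSpace V]
    (E F : Set V) (hEne : E.Nonempty) (hEcomp : IsCompact E) (hEconv : Convex ℝ E)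
    (htotal : TotalAffineFamily E)
    (hF : IsFaceOf E F) (hFcl : IsClosed F) :
    ∃ u ∈ F, IsExtremePointOf E u := by
  obtain ⟨hFconv, hFne, hFE, hFext⟩ := hF
  haveI : CompactSpace E := isCompact_iff_compactSpace.mp hEcomp
  set S : Set (Set V) := {D | D.Nonempty ∧ D ⊆ F ∧
      IsClosed ((Subtype.val : E → V) ⁻¹' D) ∧ Convex ℝ D ∧
      ∀ u ∈ D, ∀ α : ℝ, 0 < α → α < 1 → ∀ u₁ ∈ E, ∀ u₂ ∈ E,
        u = α • u₁ + (1 - α) • u₂ → u₁ ∈ D ∧ u₂ ∈ D} with hS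
  have hFS : F ∈ S := ⟨hFne, subset_rfl, hFcl.preimage continuous_subtype_val, hFconv, hFext⟩
  have hzorn : ∃ m, m ⊆ F ∧ Minimal (· ∈ S) m := by
    refine zorn_superset_nonempty S ?_ F hFS
    intro c hcS hchain hcne
    refine ⟨⋂₀ c, ?_, fun s hs => Set.sInter_subset_of_mem hs⟩
    obtain ⟨D₀, hD₀⟩ := hcne
    haveI : Nonempty c := ⟨⟨D₀, hD₀⟩⟩
    have hne : (⋂₀ c).Nonempty := by
      have := IsCompact.nonempty_iInter_of_directed_nonempty_isCompact_isClosed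
        (fun D : c => (Subtype.val : E → V) ⁻¹' (D : Set V))
        (fun D₁ D₂ => by
          rcases hchain.total D₁.2 D₂.2 with h | h
          · exact ⟨D₁, Set.Subset.rfl, Set.preimage_mono h⟩
          · exact ⟨D₂, Set.preimage_mono h, Set.Subset.rfl⟩)
        (fun D => by
          obtain ⟨x, hx⟩ := (hcS D.2).1
          exact ⟨⟨x, hFE ((hcS D.2).2.1 hx)⟩, hx⟩)
        (fun D => ((hcS D.2).2.2.1).isCompact)
        (fun D => (hcS D.2).2.2.1)
      obtain ⟨x, hx⟩ := this
      refine ⟨↑x, Set.mem_sInter.2 fun D hD => ?_⟩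
      exact Set.mem_iInter.1 hx ⟨D, hD⟩
    refine ⟨hne, (Set.sInter_subset_of_mem hD₀).trans (hcS hD₀).2.1, ?_, ?_, ?_⟩
    · rw [Set.preimage_sInter]
      exact isClosed_biInter fun D hD => (hcS hD).2.2.1
    · exact convex_sInter fun D hD => (hcS hD).2.2.2.1
    · intro u hu α hα0 hα1 u₁ h1 u₂ h2 hdec
      constructor <;>
      · refine Set.mem_sInter.2 fun D hD => ?_
        have := (hcS hD).2.2.2.2 u (Set.mem_sInter.1 hu D hD) α hα0 hα1 u₁ h1 u₂ h2 hdec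
        first
          | exact this.1
          | exact this.2
  obtain ⟨D, hDF, hmin⟩ := hzorn
  have hDS : D ∈ S := hmin.1
  obtain ⟨hDne, hDFsub, hDcl, hDconv, hDext⟩ := hDS
  have hDE : D ⊆ E := hDFsub.trans hFE
  obtain ⟨u, huD⟩ := hDne
  -- D is a singleton
  have hsingle : ∀ y ∈ D, y = u := by
    by_contra hcon
    push_neg at hcon
    obtain ⟨y, hyD, hyu⟩ := hcon
    obtain ⟨f, ⟨hfbot, haff⟩, ⟨c, hc⟩, hlsc, hfneq⟩ :=
      htotal y (hDE hyD) u (hDE huD) hyu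
    -- attain minimum of f on D
    have hg : LowerSemicontinuous (fun x : E => f ↑x) := aux_restrict hlsc
    obtain ⟨z', hz'D, hz'min⟩ := aux_min (hDcl.isCompact) (⟨⟨u, hDE huD⟩, huD⟩ :
      ((Subtype.val : E → V) ⁻¹' D).Nonempty) hg
    set z : V := ↑z' with hz
    have hzD : z ∈ D := hz'D
    have hzmin : ∀ w ∈ D, f z ≤ f w := by
      intro w hw
      exact hz'min ⟨w, hDE hw⟩ hw
    have hmbot : f z ≠ ⊥ := hfbot z (hDE hzD)
    have hmtop : f z ≠ ⊤ := by
      intro htop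
      have h1 : f y = ⊤ := top_le_iff.1 (htop ▸ hzmin y hyD)
      have h2 : f u = ⊤ := top_le_iff.1 (htop ▸ hzmin u huD)
      exact hfneq (h1.trans h2.symm)
    set m : ℝ := (f z).toReal with hmdef
    have hm : f z = (m : EReal) := (EReal.coe_toReal hmtop hmbot).symm
    have hzmin' : ∀ w ∈ D, (m : EReal) ≤ f w := fun w hw => hm ▸ hzmin w hw
    set D' : Set V := {w ∈ D | f w ≤ (m : EReal)} with hD'def
    have hD'S : D' ∈ S := by
      refine ⟨⟨z, hzD, le_of_eq hm⟩, (Set.sep_subset _ _).trans hDFsub, ?_, ?_, ?_⟩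
      · have : (Subtype.val : E → V) ⁻¹' D' =
            ((Subtype.val : E → V) ⁻¹' D) ∩ ((fun x : E => f ↑x) ⁻¹' Set.Iic (m : EReal)) := by
          ext p
          simp [hD'def, Set.mem_preimage, Set.mem_Iic]
        rw [this]
        exact hDcl.inter (hg.isClosed_preimage _)
      · intro p hp q hq a b ha hb hab
        have hb' : b = 1 - a := by linarith
        subst hb'
        refine ⟨hDconv hp.1 hq.1 ha hb hab, ?_⟩
        rw [haff p (hDE hp.1) q (hDE hq.1) a ha (by linarith)]
        exact aux_combo ha hb hab (hc p (hDE hp.1)) hp.2 (hc q (hDE hq.1)) hq.2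
      · intro u' hu' α hα0 hα1 u₁ h1 u₂ h2 hdec
        obtain ⟨hu₁D, hu₂D⟩ := hDext u' hu'.1 α hα0 hα1 u₁ h1 u₂ h2 hdec
        have heq : f u' = (α : EReal) * f u₁ + (((1 - α) : ℝ) : EReal) * f u₂ := by
          rw [hdec]; exact haff u₁ h1 u₂ h2 α hα0.le hα1.le
        have hle : (α : EReal) * f u₁ + (((1 - α) : ℝ) : EReal) * f u₂ ≤ (m : EReal) :=
          heq ▸ hu'.2
        obtain ⟨he1, he2⟩ := aux_key hα0 hα1 (hzmin' u₁ hu₁D) (hzmin' u₂ hu₂D) hle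
        exact ⟨⟨hu₁D, le_of_eq he1⟩, ⟨hu₂D, le_of_eq he2⟩⟩
    have hD'D : D ⊆ D' := hmin.2 hD'S (Set.sep_subset _ _)
    -- but one of y, u has f-value > m
    rcases hfneq.lt_or_gt with hlt | hlt
    · have h1 : (m : EReal) < f u := lt_of_le_of_lt (hzmin' y hyD) hlt
      exact absurd (hD'D huD).2 (not_le.2 h1)
    · have h1 : (m : EReal) < f y := lt_of_le_of_lt (hzmin' u huD) hlt
      exact absurd (hD'D hyD).2 (not_le.2 h1)
  have hDeq : D = {u} := by
    apply Set.eq_singleton_iff_unique_mem.2 ⟨huD, hsingle⟩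
  refine ⟨u, hDFsub huD, ?_⟩
  rw [IsExtremePointOf, ← hDeq]
  exact ⟨⟨u, huD⟩, hDE, hDext⟩
end

section
/- Let $E$ be a nonempty compact convex subset of a topological real vector space such that the family of $(-\infty,+\infty]$-valued bounded-below lower semicontinuous affine functions on $E$ separates points. Then $E$ has at least one extreme point. -/
open Set Filter

/-- restriction of a lower semicontinuous-on function is lower semicontinuous. -/
lemma myLscRestrict {X : Type*} [TopologicalSpace X] {s : Set X} {f : X → EReal}
    (hf : LowerSemicontinuousOn f s) : LowerSemicontinuous (s.restrict f) := by
  intro x y hy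
  have h := hf x x.2 y hy
  rw [← map_nhds_subtype_val, Filter.eventually_map] at h
  exact h

/-- lsc function on nonempty compact set attains a minimum. -/
lemma myExistsMin {X : Type*} [TopologicalSpace X] {K : Set X} (hK : IsCompact K)
    (hne : K.Nonempty) {f : X → EReal} (hf : LowerSemicontinuousOn f K) :
    ∃ w ∈ K, ∀ z ∈ K, f w ≤ f z := by
  haveI : CompactSpace ↥K := isCompact_iff_compactSpace.mp hK
  haveI : Nonempty ↥K := hne.to_subtype
  set g := K.restrict f with hg
  have hgl : LowerSemicontinuous g := myLscRestrict hf
  have h := IsCompact.nonempty_iInter_of_directed_nonempty_isCompact_isClosed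
      (fun p : ↥K => {q : ↥K | g q ≤ g p}) ?_ ?_ ?_ ?_
  · obtain ⟨w, hw⟩ := h
    simp only [mem_iInter, mem_setOf_eq] at hw
    exact ⟨w.1, w.2, fun z hz => hw ⟨z, hz⟩⟩
  · intro p q
    rcases le_total (g p) (g q) with h' | h'
    · exact ⟨p, Set.Subset.rfl, fun r hr => le_trans hr h'⟩
    · exact ⟨q, fun r hr => le_trans hr h', Set.Subset.rfl⟩
  · exact fun p => ⟨p, le_refl (g p)⟩
  · exact fun p => (hgl.isClosed_preimage (g p)).isCompact
  · exact fun p => hgl.isClosed_preimage (g p)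

lemma myHelperLe (α : ℝ) (hα : 0 ≤ α) (hα1 : α ≤ 1) (a b : EReal) (r : ℝ)
    (ha : a ≤ (r : EReal)) (hb : b ≤ (r : EReal)) (ha' : a ≠ ⊥) (hb' : b ≠ ⊥) :
    (α : EReal) * a + (1 - (α : EReal)) * b ≤ (r : EReal) := by
  rw [show (1 - (α : EReal)) = ((1 - α : ℝ) : EReal) by norm_cast]
  lift a to ℝ using ⟨ne_top_of_le_ne_top (EReal.coe_ne_top r) ha, ha'⟩
  lift b to ℝ using ⟨ne_top_of_le_ne_top (EReal.coe_ne_top r) hb, hb'⟩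
  rw [← EReal.coe_mul, ← EReal.coe_mul, ← EReal.coe_add, EReal.coe_le_coe_iff]
  rw [EReal.coe_le_coe_iff] at ha hb
  nlinarith

lemma myHelperEq (α : ℝ) (hα : 0 < α) (hα1 : α < 1) (a b m : EReal)
    (ha : m ≤ a) (hb : m ≤ b) (hm : m ≠ ⊥) (ha' : a ≠ ⊥) (hb' : b ≠ ⊥)
    (h : (α : EReal) * a + (1 - (α : EReal)) * b = m) : a = m ∧ b = m := by
  rw [show (1 - (α : EReal)) = ((1 - α : ℝ) : EReal) by norm_cast] at h
  induction m with
  | bot => exact absurd rfl hm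
  | top => exact ⟨top_le_iff.mp ha, top_le_iff.mp hb⟩
  | coe r =>
    have hαpos : (0 : EReal) < (α : EReal) := EReal.coe_pos.mpr hα
    have hβpos : (0 : EReal) < ((1 - α : ℝ) : EReal) := EReal.coe_pos.mpr (by linarith)
    induction a with
    | bot => exact absurd rfl ha'
    | top =>
      exfalso
      rw [EReal.mul_top_of_pos hαpos] at h
      induction b with
      | bot => exact absurd rfl hb'
      | top =>
        rw [EReal.mul_top_of_pos hβpos, EReal.top_add_top] at h
        exact (EReal.top_ne_coe r) h
      | coe s =>
        rw [← EReal.coe_mul, EReal.top_add_coe] at h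
        exact (EReal.top_ne_coe r) h
    | coe s =>
      induction b with
      | bot => exact absurd rfl hb'
      | top =>
        exfalso
        rw [EReal.mul_top_of_pos hβpos, ← EReal.coe_mul, EReal.coe_add_top] at h
        exact (EReal.top_ne_coe r) h
      | coe t =>
        rw [← EReal.coe_mul, ← EReal.coe_mul, ← EReal.coe_add, EReal.coe_eq_coe_iff] at h
        rw [EReal.coe_le_coe_iff] at ha hb
        constructor <;> rw [EReal.coe_eq_coe_iff] <;> nlinarith

lemma myCases (m : EReal) (h : m ≠ ⊥) : m = ⊤ ∨ ∃ r : ℝ, m = (r : EReal) := by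
  induction m with
  | bot => exact absurd rfl h
  | coe r => exact Or.inr ⟨r, rfl⟩
  | top => exact Or.inl rfl



theorem exists_extreme_point {V : Type*} [AddCommGroup V] [Module ℝ V]
    [TopologicalSpace V]
    (E : Set V) (hEne : E.Nonempty) (hEcomp : IsCompact E) (hEconv : Convex ℝ E)
    (htotal : TotalAffineFamily E) :
    ∃ u, IsExtremePointOf E u := by
  classical
  haveI : CompactSpace ↥E := isCompact_iff_compactSpace.mp hEcomp
  set S : Set (Set V) := {F | IsFaceOf E F ∧ IsClosed ((Subtype.val : ↥E → V) ⁻¹' F)} with hSdef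
  have hES : E ∈ S := by
    refine ⟨⟨hEconv, hEne, Set.Subset.rfl, ?_⟩, ?_⟩
    · exact fun u hu α hα hα1 u₁ hu₁ u₂ hu₂ h => ⟨hu₁, hu₂⟩
    · have : (Subtype.val : ↥E → V) ⁻¹' E = Set.univ := by
        ext p; simp [p.2]
      rw [this]; exact isClosed_univ
  have Hc : ∀ c ⊆ S, IsChain (· ⊆ ·) c → c.Nonempty → ∃ lb ∈ S, ∀ s ∈ c, lb ⊆ s := by
    intro c hcS hchain hcne
    refine ⟨⋂₀ c, ⟨⟨?_, ?_, ?_, ?_⟩, ?_⟩, fun s hs => Set.sInter_subset_of_mem hs⟩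
    · exact convex_sInter fun s hs => (hcS hs).1.1
    · -- nonempty
      haveI : Nonempty ↥c := hcne.to_subtype
      have h := IsCompact.nonempty_iInter_of_directed_nonempty_isCompact_isClosed
          (fun s : ↥c => (Subtype.val : ↥E → V) ⁻¹' s.1) ?_ ?_ ?_ ?_
      · obtain ⟨p, hp⟩ := h
        simp only [Set.mem_iInter, Set.mem_preimage] at hp
        exact ⟨p.1, Set.mem_sInter.mpr fun s hs => hp ⟨s, hs⟩⟩
      · intro s t
        rcases hchain.total s.2 t.2 with h' | h'
        · exact ⟨s, Set.Subset.rfl, Set.preimage_mono h'⟩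
        · exact ⟨t, Set.preimage_mono h', Set.Subset.rfl⟩
      · intro s
        obtain ⟨x, hx⟩ := (hcS s.2).1.2.1
        exact ⟨⟨x, (hcS s.2).1.2.2.1 hx⟩, hx⟩
      · exact fun s => ((hcS s.2).2).isCompact
      · exact fun s => (hcS s.2).2
    · obtain ⟨s, hs⟩ := hcne
      exact (Set.sInter_subset_of_mem hs).trans (hcS hs).1.2.2.1
    · intro u hu α hα hα1 u₁ hu₁ u₂ hu₂ h
      constructor <;> refine Set.mem_sInter.mpr fun s hs => ?_
      · exact ((hcS hs).1.2.2.2 u (Set.mem_sInter.mp hu s hs) α hα hα1 u₁ hu₁ u₂ hu₂ h).1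
      · exact ((hcS hs).1.2.2.2 u (Set.mem_sInter.mp hu s hs) α hα hα1 u₁ hu₁ u₂ hu₂ h).2
    · rw [Set.preimage_sInter]
      exact isClosed_biInter fun s hs => (hcS hs).2
  obtain ⟨M, -, hM⟩ := zorn_superset_nonempty S Hc E hES
  have hMS : M ∈ S := hM.1
  have hME : M ⊆ E := hMS.1.2.2.1
  have hMcomp : IsCompact M := by
    have h := (hMS.2.isCompact).image continuous_subtype_val
    rwa [Set.image_preimage_eq_inter_range, Subtype.range_coe,
      Set.inter_eq_left.mpr hME] at h
  have key : ∀ y ∈ M, ∀ y' ∈ M, y = y' := by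
    intro y hy y' hy'
    by_contra hne'
    obtain ⟨f, hfaff, -, hlsc, hfneq⟩ := htotal y (hME hy) y' (hME hy') hne'
    obtain ⟨w, hwM, hwmin⟩ := myExistsMin hMcomp ⟨y, hy⟩ (hlsc.mono hME)
    have hmne : f w ≠ ⊥ := hfaff.1 w (hME hwM)
    have hKS : {z ∈ M | f z ≤ f w} ∈ S := by
      refine ⟨⟨?_, ⟨w, hwM, le_refl _⟩, fun z hz => hME hz.1, ?_⟩, ?_⟩
      · -- convex
        intro x₁ hx₁ x₂ hx₂ a b ha hb hab
        obtain rfl : b = 1 - a := by linarith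
        have hzM := hMS.1.1 hx₁.1 hx₂.1 ha hb hab
        refine ⟨hzM, ?_⟩
        rw [hfaff.2 x₁ (hME hx₁.1) x₂ (hME hx₂.1) a ha (by linarith)]
        rcases myCases (f w) hmne with htop | ⟨r, hr⟩
        · rw [htop]; exact le_top
        · rw [hr]
          exact myHelperLe a ha (by linarith) _ _ r (hr ▸ hx₁.2) (hr ▸ hx₂.2)
            (hfaff.1 x₁ (hME hx₁.1)) (hfaff.1 x₂ (hME hx₂.1))
      · -- extreme
        intro u' hu' α hα hα1 u₁ hu₁ u₂ hu₂ h
        obtain ⟨h1, h2⟩ := hMS.1.2.2.2 u' hu'.1 α hα hα1 u₁ hu₁ u₂ hu₂ h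
        have heq : (α : EReal) * f u₁ + (1 - (α : EReal)) * f u₂ = f w := by
          rw [← hfaff.2 u₁ hu₁ u₂ hu₂ α hα.le hα1.le, ← h]
          exact le_antisymm hu'.2 (hwmin u' hu'.1)
        obtain ⟨e1, e2⟩ := myHelperEq α hα hα1 (f u₁) (f u₂) (f w)
          (hwmin u₁ h1) (hwmin u₂ h2) hmne (hfaff.1 u₁ hu₁) (hfaff.1 u₂ hu₂) heq
        exact ⟨⟨h1, e1.le⟩, ⟨h2, e2.le⟩⟩
      · -- closed
        have hpre : (Subtype.val : ↥E → V) ⁻¹' {z ∈ M | f z ≤ f w}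
            = ((Subtype.val : ↥E → V) ⁻¹' M) ∩ (E.restrict f ⁻¹' Set.Iic (f w)) := by
          ext p
          simp [Set.restrict, Set.mem_sep_iff]
        rw [hpre]
        exact hMS.2.inter ((myLscRestrict hlsc).isClosed_preimage (f w))
    have hMK : M ⊆ {z ∈ M | f z ≤ f w} := hM.2 hKS (fun z hz => hz.1)
    have hfy : f y = f w := le_antisymm (hMK hy).2 (hwmin y hy)
    have hfy' : f y' = f w := le_antisymm (hMK hy').2 (hwmin y' hy')
    exact hfneq (hfy.trans hfy'.symm)
  obtain ⟨u, hu⟩ := hMS.1.2.1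
  refine ⟨u, ⟨u, rfl⟩, Set.singleton_subset_iff.mpr (hME hu), ?_⟩
  intro v hv α hα hα1 u₁ hu₁ u₂ hu₂ h
  rw [Set.mem_singleton_iff] at hv
  have hvM : v ∈ M := by rw [hv]; exact hu
  obtain ⟨h1, h2⟩ := hMS.1.2.2.2 v hvM α hα hα1 u₁ hu₁ u₂ hu₂ h
  exact ⟨Set.mem_singleton_iff.mpr (key u₁ h1 u hu),
    Set.mem_singleton_iff.mpr (key u₂ h2 u hu)⟩
end

section
/- Let $E$ be a nonempty convex subset of $\mathbb{R}^{J+1}$ and let $u \in E$ be Pareto optimal in $E$. Then the minimal face $G_E(u)$ of $E$ containing $u$ consists entirely of Pareto optimal points of $E$. -/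
/-- `u` is a Pareto optimal point of `E ⊆ ℝ^{J+1}`. -/
def IsPareto {J : ℕ} (E : Set (Fin (J + 1) → ℝ)) (u : Fin (J + 1) → ℝ) : Prop :=
  u ∈ E ∧ ∀ v ∈ E, (∀ j, v j ≤ u j) → v = u

/-- The minimal face of `E` containing `u`: the intersection of all faces of `E`
containing `u`. -/
def minimalFace {V : Type*} [AddCommGroup V] [Module ℝ V] (E : Set V) (u : V) : Set V :=
  ⋂₀ {F | IsFaceOf E F ∧ u ∈ F}

/-!
The points `x ∈ E` for which the segment from `x` to `u` can be prolonged beyond `u` inside `E`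
form a face of `E` containing `u`, hence a superset of the minimal face. If such an `x` were
dominated by `v ∈ E`, then moving `u` slightly in the direction `v - x`, which stays in `E`
because the segment prolongs past `u`, would give a point of `E` dominating `u`.
-/

section Prolongable

variable {V : Type*} [AddCommGroup V] [Module ℝ V]

def prolongable (E : Set V) (u : V) : Set V :=
  {x | x ∈ E ∧ ∃ t : ℝ, 0 < t ∧ u + t • (u - x) ∈ E}

variable {E : Set V} {u x : V}

theorem self_mem_prolongable (hu : u ∈ E) : u ∈ prolongable E u :=
  ⟨hu, 1, one_pos, by simpa using hu⟩

theorem add_smul_sub_mem_of_le (hE : Convex ℝ E) (hu : u ∈ E) {s t : ℝ} (hs : 0 ≤ s)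
    (hst : s ≤ t) (ht : u + t • (u - x) ∈ E) : u + s • (u - x) ∈ E := by
  rcases hs.eq_or_lt with rfl | hs
  · simpa using hu
  have ht0 : 0 < t := hs.trans_le hst
  have key :=
    hE.add_smul_sub_mem hu ht (t := s / t) ⟨by positivity, div_le_one_of_le₀ hst ht0.le⟩
  rwa [add_sub_cancel_left, smul_smul, div_mul_cancel₀ s ht0.ne'] at key

theorem convex_prolongable (hE : Convex ℝ E) (hu : u ∈ E) : Convex ℝ (prolongable E u) := by
  rintro x₁ ⟨hx₁, t₁, ht₁, hy₁⟩ x₂ ⟨hx₂, t₂, ht₂, hy₂⟩ a b ha hb hab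
  set t := min t₁ t₂
  refine ⟨hE hx₁ hx₂ ha hb hab, t, lt_min ht₁ ht₂, ?_⟩
  have hz₁ := add_smul_sub_mem_of_le hE hu (lt_min ht₁ ht₂).le (min_le_left t₁ t₂) hy₁
  have hz₂ := add_smul_sub_mem_of_le hE hu (lt_min ht₁ ht₂).le (min_le_right t₁ t₂) hy₂
  convert hE hz₁ hz₂ ha hb hab using 1
  obtain rfl : b = 1 - a := by linarith
  module

theorem mem_prolongable_of_eq_add (hE : Convex ℝ E) (hx : x ∈ prolongable E u) {v₁ v₂ : V}
    (hv₁ : v₁ ∈ E) (hv₂ : v₂ ∈ E) {a b : ℝ} (ha : 0 < a) (hb : 0 ≤ b) (hab : a + b = 1)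
    (hxv : x = a • v₁ + b • v₂) : v₁ ∈ prolongable E u := by
  obtain ⟨-, t, ht, hy⟩ := hx
  have hd : 0 < 1 + t * b := by positivity
  -- for `s = t * a / (1 + t * b)`, the point `u + s • (u - v₁)` divides the segment
  -- `[u + t • (u - x), v₂]` in the ratio `t * b : 1`
  refine ⟨hv₁, t * a / (1 + t * b), by positivity, ?_⟩
  have hmem := hE hy hv₂ (inv_nonneg.2 hd.le)
    (show 0 ≤ t * b / (1 + t * b) by positivity) (by field_simp)
  convert hmem using 1
  subst hxv
  obtain rfl : a = 1 - b := by linarith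
  match_scalars <;> field_simp <;> ring

theorem isFaceOf_prolongable (hE : Convex ℝ E) (hu : u ∈ E) : IsFaceOf E (prolongable E u) := by
  refine ⟨convex_prolongable hE hu, ⟨u, self_mem_prolongable hu⟩, fun _ hx ↦ hx.1, ?_⟩
  intro x hx α hα₀ hα₁ v₁ hv₁ v₂ hv₂ hxv
  refine ⟨mem_prolongable_of_eq_add hE hx hv₁ hv₂ hα₀ (sub_pos.2 hα₁).le (by ring) hxv,
    mem_prolongable_of_eq_add hE hx hv₂ hv₁ (sub_pos.2 hα₁) hα₀.le (sub_add_cancel 1 α) ?_⟩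
  rw [hxv, add_comm]

end Prolongable

theorem minimalFace_subset_of_isFaceOf {V : Type*} [AddCommGroup V] [Module ℝ V] {E F : Set V}
    {u : V} (hF : IsFaceOf E F) (hu : u ∈ F) : minimalFace E u ⊆ F :=
  Set.sInter_subset_of_mem ⟨hF, hu⟩

theorem IsPareto.of_mem_prolongable {J : ℕ} {E : Set (Fin (J + 1) → ℝ)} {u x : Fin (J + 1) → ℝ}
    (hE : Convex ℝ E) (hu : IsPareto E u) (hx : x ∈ prolongable E u) : IsPareto E x := by
  obtain ⟨hxE, t, ht, hy⟩ := hx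
  refine ⟨hxE, fun v hv hvx ↦ ?_⟩
  have hc : 0 < t / (1 + t) := by positivity
  have hw : u + (t / (1 + t)) • (v - x) ∈ E := by
    convert hE hv hy hc.le (show 0 ≤ (1 + t)⁻¹ by positivity)
      (by field_simp; ring) using 1
    match_scalars <;> field_simp
  have hwu : u + (t / (1 + t)) • (v - x) ≤ u :=
    add_le_of_nonpos_right (smul_nonpos_of_nonneg_of_nonpos hc.le (sub_nonpos.2 hvx))
  have hzero := add_eq_left.1 (hu.2 _ hw hwu)
  rwa [smul_eq_zero, or_iff_right hc.ne', sub_eq_zero] at hzero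

theorem minimalFace_subset_pareto_general {J : ℕ}
    (E : Set (Fin (J + 1) → ℝ)) (hEconv : Convex ℝ E)
    (u : Fin (J + 1) → ℝ) (hu : IsPareto E u) :
    ∀ x ∈ minimalFace E u, IsPareto E x := fun _ hx ↦
  hu.of_mem_prolongable hEconv <|
    minimalFace_subset_of_isFaceOf (isFaceOf_prolongable hEconv hu.1)
      (self_mem_prolongable hu.1) hx

theorem minimalFace_subset_pareto {J : ℕ}
    (E : Set (Fin (J + 1) → ℝ)) (hEne : E.Nonempty) (hEconv : Convex ℝ E)
    (u : Fin (J + 1) → ℝ) (hu : IsPareto E u) :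
    ∀ x ∈ minimalFace E u, IsPareto E x :=
  minimalFace_subset_pareto_general E hEconv u hu
end

section
/- Let $E$ be a nonempty convex subset of $\mathbb{R}^{J+1}$ and $u \in E$ Pareto optimal. Then there exists a nonzero vector $b \in \mathbb{R}^{J+1}$ with $b \ge 0$ componentwise and a real $\beta$ such that $\langle b, u \rangle = \beta$ and $\langle b, x \rangle \ge \beta$ for all $x \in E$. -/
/-!
The open orthant `{v | ∀ j, v j < u j}` below a Pareto point `u` is open, convex and disjoint
from `E`, so Hahn–Banach gives a continuous functional `f` and a level `c` with `f < c` on the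
orthant and `c ≤ f` on `E`. The closure of the orthant is `{v | v ≤ u}`; it contains `u`, which
forces `f u = c`, and each `u - eⱼ`, which forces `f eⱼ ≥ 0`. The coefficients `b j = f eⱼ` are
the required normal.
-/

open Set

theorem LinearMap.apply_eq_sum_apply_single_mul {R ι : Type*} [CommSemiring R] [Fintype ι]
    [DecidableEq ι] (f : (ι → R) →ₗ[R] R) (x : ι → R) :
    f x = ∑ j, f (Pi.single j 1) * x j := by
  conv_lhs => rw [← Finset.univ_sum_single x]
  simp only [map_sum]
  refine Finset.sum_congr rfl fun j _ => ?_
  rw [mul_comm, ← smul_eq_mul, ← map_smul, ← Pi.single_smul', smul_eq_mul, mul_one]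

theorem closure_pi_univ_Iio {ι : Type*} [Finite ι] {α : ι → Type*} [∀ i, TopologicalSpace (α i)]
    [∀ i, LinearOrder (α i)] [∀ i, OrderTopology (α i)] [∀ i, DenselyOrdered (α i)]
    [∀ i, NoMinOrder (α i)] (u : ∀ i, α i) :
    closure (univ.pi fun i => Iio (u i)) = Iic u := by
  simp only [closure_pi_set, closure_Iio, pi_univ_Iic]

theorem IsPareto.disjoint_pi_Iio {J : ℕ} {E : Set (Fin (J + 1) → ℝ)} {u : Fin (J + 1) → ℝ}
    (hu : IsPareto E u) : Disjoint (univ.pi fun j => Iio (u j)) E := by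
  refine disjoint_left.2 fun v hv hvE => ?_
  have hvu : v = u := hu.2 v hvE fun j => (hv j trivial).le
  exact (hv 0 trivial).ne (congrFun hvu 0)

theorem exists_nonneg_dual_isMinOn_of_disjoint_pi_Iio {ι : Type*} [Finite ι] [DecidableEq ι]
    {E : Set (ι → ℝ)} (hE : Convex ℝ E) {u : ι → ℝ} (hu : u ∈ E)
    (hdisj : Disjoint (univ.pi fun i => Iio (u i)) E) :
    ∃ f : (ι → ℝ) →L[ℝ] ℝ, f ≠ 0 ∧ (∀ i, 0 ≤ f (Pi.single i 1)) ∧ IsMinOn f E u := by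
  obtain ⟨f, c, hlt, hge⟩ := geometric_hahn_banach_open (convex_pi fun i _ => convex_Iio (u i))
    (isOpen_set_pi finite_univ fun i _ => isOpen_Iio) hE hdisj
  have hle : ∀ v ≤ u, f v ≤ c := by
    intro v hv
    have hclosure : closure (univ.pi fun i => Iio (u i)) ⊆ {v | f v ≤ c} :=
      closure_minimal (fun v hv => (hlt v hv).le) (isClosed_le f.continuous continuous_const)
    exact hclosure (by rwa [closure_pi_univ_Iio])
  have hfu : f u = c := (hle u le_rfl).antisymm (hge u hu)
  refine ⟨f, ?_, fun i => ?_, fun x hx => hfu ▸ hge x hx⟩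
  · rintro rfl
    have hc_pos : 0 < c := by simpa using hlt (u - 1) fun i _ => by simp
    have hc_nonpos : c ≤ 0 := by simpa using hge u hu
    linarith
  · have hshift := hle (u - Pi.single i 1) (sub_le_self _ (Pi.single_nonneg.2 zero_le_one))
    rw [map_sub, hfu] at hshift
    linarith

theorem pareto_supporting_hyperplane_general {J : ℕ}
    (E : Set (Fin (J + 1) → ℝ)) (hEconv : Convex ℝ E)
    (u : Fin (J + 1) → ℝ) (hu : IsPareto E u) :
    ∃ (b : Fin (J + 1) → ℝ) (β : ℝ), b ≠ 0 ∧ (∀ j, 0 ≤ b j) ∧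
      (∑ j, b j * u j) = β ∧ ∀ x ∈ E, β ≤ ∑ j, b j * x j := by
  obtain ⟨f, hf0, hf_nonneg, hf_min⟩ :=
    exists_nonneg_dual_isMinOn_of_disjoint_pi_Iio hEconv hu.1 hu.disjoint_pi_Iio
  have hf (x) : f x = ∑ j, f (Pi.single j 1) * x j :=
    f.toLinearMap.apply_eq_sum_apply_single_mul x
  refine ⟨fun j => f (Pi.single j 1), f u, fun hb => hf0 ?_, hf_nonneg, (hf u).symm,
    fun x hx => (hf x) ▸ hf_min hx⟩
  ext x
  simp [hf x, fun j => congrFun hb j]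

theorem pareto_supporting_hyperplane {J : ℕ}
    (E : Set (Fin (J + 1) → ℝ)) (hEne : E.Nonempty) (hEconv : Convex ℝ E)
    (u : Fin (J + 1) → ℝ) (hu : IsPareto E u) :
    ∃ (b : Fin (J + 1) → ℝ) (β : ℝ), b ≠ 0 ∧ (∀ j, 0 ≤ b j) ∧
      (∑ j, b j * u j) = β ∧ ∀ x ∈ E, β ≤ ∑ j, b j * x j :=
  pareto_supporting_hyperplane_general E hEconv u hu
end

section
/- Let $F$ be a nonempty compact topological space, $W_0,\ldots,W_J : F \to (-\infty,+\infty]$ lower semicontinuous and bounded below, and $b \in \mathbb{R}^{J+1}$ with all $b_j > 0$, $\beta \in \mathbb{R}$, with $\sum_j b_j W_j(x) \ge \beta$ whenever $(W_0(x),\ldots,W_J(x)) \in \mathbb{R}^{J+1}$, $x \in F$. Then the set $\hat O = \{w \in \mathbb{R}^{J+1} : \exists x \in F,\ w = (W_0(x),\ldots,W_J(x)),\ \sum_j b_j w_j = \beta\}$ is compact in $\mathbb{R}^{J+1}$. -/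
open Filter Topology

theorem performance_hyperplane_section_compact {J : ℕ} {F : Type*}
    [TopologicalSpace F] [CompactSpace F] [Nonempty F]
    (W : Fin (J + 1) → F → EReal)
    (hlsc : ∀ j, LowerSemicontinuous (W j))
    (hbdd : ∀ j, ∃ c : ℝ, ∀ x : F, (c : EReal) ≤ W j x)
    (b : Fin (J + 1) → ℝ) (hb : ∀ j, 0 < b j) (β : ℝ)
    (hsupp : ∀ x : F, ∀ w : Fin (J + 1) → ℝ, (∀ j, W j x = (w j : EReal)) →
      β ≤ ∑ j, b j * w j) :
    IsCompact
      {w : Fin (J + 1) → ℝ | (∃ x : F, ∀ j, W j x = (w j : EReal)) ∧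
        (∑ j, b j * w j) = β} := by
  classical
  choose c hc using hbdd
  set S := {w : Fin (J + 1) → ℝ | (∃ x : F, ∀ j, W j x = (w j : EReal)) ∧
        (∑ j, b j * w j) = β} with hSdef
  -- S is contained in a compact box
  have hsub : S ⊆ Set.Icc c (fun j => (β - ∑ i, b i * c i) / b j + c j) := by
    rintro w ⟨⟨x, hx⟩, hsum⟩
    have hcw : ∀ j, c j ≤ w j := by
      intro j
      have := hc j x
      rw [hx j] at this
      exact_mod_cast this
    refine ⟨hcw, fun j => ?_⟩
    have h1 : b j * (w j - c j) ≤ ∑ i, b i * (w i - c i) := by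
      exact Finset.single_le_sum (f := fun i => b i * (w i - c i))
        (fun i _ => mul_nonneg (hb i).le (sub_nonneg.mpr (hcw i))) (Finset.mem_univ j)
    have h2 : ∑ i, b i * (w i - c i) = β - ∑ i, b i * c i := by
      rw [← hsum, ← Finset.sum_sub_distrib]
      congr 1; ext i; ring
    rw [h2] at h1
    have := (le_div_iff₀ (hb j)).mpr (by linarith : (w j - c j) * b j ≤ β - ∑ i, b i * c i)
    linarith
  -- S is closed
  have hclosed : IsClosed S := by
    rw [← isSeqClosed_iff_isClosed]
    intro u w hu hlim
    choose xs hxs using fun n => (hu n).1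
    have hsum_n : ∀ n, ∑ j, b j * u n j = β := fun n => (hu n).2
    -- coordinatewise convergence
    have hcoord : ∀ j, Tendsto (fun n => u n j) atTop (𝓝 (w j)) := by
      intro j
      exact (continuous_apply j).continuousAt.tendsto.comp hlim
    -- cluster point of the sequence xs
    obtain ⟨x, hx⟩ : ∃ x : F, MapClusterPt x atTop xs := by
      rcases (isCompact_univ (X := F)).exists_clusterPt
        (f := Filter.map xs atTop) (le_principal_iff.mpr Filter.univ_mem) with ⟨x, _, hx⟩
      exact ⟨x, hx⟩
    have hH : (𝓝 x ⊓ Filter.map xs atTop).NeBot := hx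
    -- W j tends to w j along the mixed filter
    have htend : ∀ j, Tendsto (W j) (𝓝 x ⊓ Filter.map xs atTop) (𝓝 (w j : EReal)) := by
      intro j
      have h1 : Tendsto (fun n => W j (xs n)) atTop (𝓝 (w j : EReal)) := by
        have : (fun n => W j (xs n)) = fun n => ((u n j : ℝ) : EReal) := by
          funext n; exact hxs n j
        rw [this]
        exact (continuous_coe_real_ereal.continuousAt.tendsto).comp (hcoord j)
      have : Tendsto (W j) (Filter.map xs atTop) (𝓝 (w j : EReal)) := by
        rwa [Filter.tendsto_map'_iff]
      exact this.mono_left inf_le_right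
    -- lower semicontinuity gives W j x ≤ w j
    have hle : ∀ j, W j x ≤ (w j : EReal) := by
      intro j
      by_contra h
      push_neg at h
      obtain ⟨y, hy1, hy2⟩ := exists_between h
      have hev : ∀ᶠ z in 𝓝 x ⊓ Filter.map xs atTop, y ≤ W j z :=
        ((hlsc j x y hy2).filter_mono inf_le_left).mono fun z hz => hz.le
      exact absurd (ge_of_tendsto (htend j) hev) (not_le.mpr hy1)
    -- W j x is finite
    have hne_top : ∀ j, W j x ≠ ⊤ := fun j =>
      ((hle j).trans_lt (EReal.coe_lt_top (w j))).ne
    have hne_bot : ∀ j, W j x ≠ ⊥ := fun j =>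
      ((EReal.bot_lt_coe (c j)).trans_le (hc j x)).ne'
    set w' : Fin (J + 1) → ℝ := fun j => (W j x).toReal with hw'def
    have hcoe : ∀ j, W j x = ((w' j : ℝ) : EReal) := fun j =>
      (EReal.coe_toReal (hne_top j) (hne_bot j)).symm
    have hβ : β ≤ ∑ j, b j * w' j := hsupp x w' hcoe
    have hw'le : ∀ j, w' j ≤ w j := by
      intro j
      have := hle j
      rw [hcoe j] at this
      exact_mod_cast this
    -- the limit sum equals β
    have hsumw : ∑ j, b j * w j = β := by
      have h1 : Tendsto (fun n => ∑ j, b j * u n j) atTop (𝓝 (∑ j, b j * w j)) := by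
        apply tendsto_finset_sum
        intro j _
        exact (hcoord j).const_mul (b j)
      have h2 : Tendsto (fun n => ∑ j, b j * u n j) atTop (𝓝 β) := by
        simp only [hsum_n]; exact tendsto_const_nhds
      exact tendsto_nhds_unique h1 h2
    -- conclude w' = w
    have hsum0 : ∑ j, b j * (w j - w' j) = 0 := by
      have : ∑ j, b j * (w j - w' j) = (∑ j, b j * w j) - ∑ j, b j * w' j := by
        rw [← Finset.sum_sub_distrib]; congr 1; ext j; ring
      have h0 : 0 ≤ ∑ j, b j * (w j - w' j) :=
        Finset.sum_nonneg fun j _ =>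
          mul_nonneg (hb j).le (sub_nonneg.mpr (hw'le j))
      rw [this, hsumw] at h0 ⊢
      linarith
    have hweq : ∀ j, w' j = w j := by
      intro j
      have := (Finset.sum_eq_zero_iff_of_nonneg
        (fun i _ => mul_nonneg (hb i).le (sub_nonneg.mpr (hw'le i)))).mp hsum0
        j (Finset.mem_univ j)
      have hbj := (hb j).ne'
      have : w j - w' j = 0 := by
        rcases mul_eq_zero.mp this with h | h
        · exact absurd h hbj
        · exact h
      linarith
    exact ⟨⟨x, fun j => by rw [hcoe j, hweq j]⟩, hsumw⟩
  exact (isCompact_Icc).of_isClosed_subset hclosed hsub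
end
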